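/- arXiv:2511.22803 — 2 statements merged into one kernel-verified Lean document; each statement's English description precedes it below -/
import Mathlib

section
/- Let H be a weighted hypergraph, G its associated multigraph, f : E(G) → E(H) the natural map. If G' is an additive β-spanner of G (i.e., δ_{G'}(u,v) ≤ δ_G(u,v) + β for all u,v) with β > 0, then the sub-hypergraph H' with hyperedge set {f(e') : e' ∈ E(G')} satisfies δ_{H'}(u,v) ≤ δ_H(u,v) + β for all u,v. -/
open scoped ENNReal

variable {V : Type*}

/-- A walk in a hypergraph with hyperedge set `E`: a list of hyperedges where we can
enter and leave each hyperedge at any two of its vertices. -/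
def IsWalk (E : Set (Finset V)) : V → V → List (Finset V) → Prop
  | u, v, [] => u = v
  | u, v, h :: hs => h ∈ E ∧ u ∈ h ∧ ∃ x ∈ h, IsWalk E x v hs

/-- Hypergraph shortest-path distance: infimum of total hyperedge weight over walks. -/
noncomputable def hDist (E : Set (Finset V)) (w : Finset V → ℝ≥0∞) (u v : V) : ℝ≥0∞ :=
  sInf { d | ∃ l, IsWalk E u v l ∧ (l.map w).sum = d }

/-- A walk in a multigraph whose edges are drawn from a type `ε` with endpoint map `ends`. -/
def IsGWalk {ε : Type*} (ends : ε → V × V) (S : Set ε) : V → V → List ε → Prop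
  | u, v, [] => u = v
  | u, v, e :: es =>
      e ∈ S ∧ ∃ x, (ends e = (u, x) ∨ ends e = (x, u)) ∧ IsGWalk ends S x v es

/-- Multigraph shortest-path distance. -/
noncomputable def gDist {ε : Type*} (ends : ε → V × V) (S : Set ε) (w : ε → ℝ≥0∞)
    (u v : V) : ℝ≥0∞ :=
  sInf { d | ∃ l, IsGWalk ends S u v l ∧ (l.map w).sum = d }

/-- Edges of the associated multigraph of a hypergraph with hyperedge set `F`:
one edge `(h, a, b)` for each hyperedge `h ∈ F` and ordered pair of distinct
vertices `a b ∈ h`, with weight `z h`. -/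
def assocEdges (F : Set (Finset V)) : Set (Finset V × V × V) :=
  {e | e.1 ∈ F ∧ e.2.1 ∈ e.1 ∧ e.2.2 ∈ e.1 ∧ e.2.1 ≠ e.2.2}

/-- Endpoints of an edge of the associated multigraph. -/
def assocEnds : Finset V × V × V → V × V := fun e => e.2

lemma hwalk_to_gwalk (F : Set (Finset V)) (z : Finset V → ℝ≥0∞) :
    ∀ (l : List (Finset V)) (u v : V), IsWalk F u v l →
      ∃ l', IsGWalk assocEnds (assocEdges F) u v l' ∧
        (l'.map (fun e => z e.1)).sum ≤ (l.map z).sum := by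
  intro l
  induction l with
  | nil => intro u v h; exact ⟨[], h, le_rfl⟩
  | cons h hs ih =>
    rintro u v ⟨hF, hu, x, hx, hw⟩
    obtain ⟨l', hl', hsum⟩ := ih x v hw
    by_cases hux : u = x
    · subst hux
      exact ⟨l', hl', le_trans hsum (by simp [List.map_cons, le_add_self])⟩
    · refine ⟨(h, u, x) :: l', ⟨⟨hF, hu, hx, hux⟩, x, Or.inl rfl, hl'⟩, ?_⟩
      simpa using add_le_add_right hsum (z h)

lemma gwalk_to_hwalk (F : Set (Finset V)) (z : Finset V → ℝ≥0∞)
    (G' : Set (Finset V × V × V)) (hsub : G' ⊆ assocEdges F) :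
    ∀ (l : List (Finset V × V × V)) (u v : V), IsGWalk assocEnds G' u v l →
      ∃ l', IsWalk (Prod.fst '' G') u v l' ∧
        (l'.map z).sum = (l.map (fun e => z e.1)).sum := by
  intro l
  induction l with
  | nil => intro u v h; exact ⟨[], h, rfl⟩
  | cons e es ih =>
    rintro u v ⟨heG, x, hends, hw⟩
    obtain ⟨l', hl', hsum⟩ := ih x v hw
    obtain ⟨_, h1, h2, _⟩ := hsub heG
    have hu : u ∈ e.1 ∧ x ∈ e.1 := by
      rcases hends with h | h <;> simp [assocEnds, Prod.ext_iff] at h <;>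
        [exact ⟨h.1 ▸ h1, h.2 ▸ h2⟩; exact ⟨h.2 ▸ h2, h.1 ▸ h1⟩]
    refine ⟨e.1 :: l', ⟨⟨e, heG, rfl⟩, hu.1, x, hu.2, hl'⟩, by simp [hsum]⟩

/-- an additive β-spanner `G'` of the associated multigraph of a hypergraph
translates, via the map `e ↦ e.1`, into an additive β-hyperspanner of the hypergraph. -/
theorem assoc_additive_spanner_to_hyperspanner
    (F : Set (Finset V)) (z : Finset V → ℝ≥0∞)
    (hcard : ∀ h ∈ F, 2 ≤ h.card) (hpos : ∀ h ∈ F, 0 < z h)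
    (β : ℝ≥0∞) (hβ : 0 < β)
    (G' : Set (Finset V × V × V)) (hsub : G' ⊆ assocEdges F)
    (hspan : ∀ u v : V,
      gDist assocEnds G' (fun e => z e.1) u v
        ≤ gDist assocEnds (assocEdges F) (fun e => z e.1) u v + β)
    (u v : V) :
    hDist (Prod.fst '' G') z u v ≤ hDist F z u v + β := by
  have h1 : hDist (Prod.fst '' G') z u v ≤ gDist assocEnds G' (fun e => z e.1) u v := by
    refine le_sInf ?_
    rintro d ⟨l, hl, rfl⟩
    obtain ⟨l', hl', hsum⟩ := gwalk_to_hwalk F z G' hsub l u v hl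
    exact sInf_le ⟨l', hl', hsum⟩
  have h2 : gDist assocEnds (assocEdges F) (fun e => z e.1) u v ≤ hDist F z u v := by
    refine le_sInf ?_
    rintro d ⟨l, hl, rfl⟩
    obtain ⟨l', hl', hsum⟩ := hwalk_to_gwalk F z l u v hl
    exact le_trans (sInf_le ⟨l', hl', rfl⟩) hsum
  exact le_trans h1 (le_trans (hspan u v) (add_le_add_left h2 β))
end

section
/- Let H be an r-uniform hypergraph with girth at least 2k+2 (so in particular no two distinct hyperedges share two or more vertices), and let H' be its t-fold blow-up as above. Let h = {(u_1,i_1),...,(u_r,i_r)} be any hyperedge of H', let S = H' \ {h}, and let F be the set of all hyperedges of H' arising from the same base hyperedge {u_1,...,u_r} other than h. Then for any two vertices x ≠ y of h, every walk from x to y in S \ F has length at least 2k+1, whereas δ_{H'\F}(x,y) = 1. Consequently, the only f-EFT (2k-1)-hyperspanner of H' (for f ≥ t^r − 1) is H' itself. -/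
open scoped ENNReal

variable {V : Type*}

/-- A Berge cycle of length `l` in a hypergraph: distinct vertices `v i` and distinct
hyperedges `e i` with `v i, v (i+1) ∈ e i` cyclically. -/
def HasBergeCycle (E : Set (Finset V)) (l : ℕ) : Prop :=
  2 ≤ l ∧ ∃ (v : ZMod l → V) (e : ZMod l → Finset V),
    Function.Injective v ∧ Function.Injective e ∧
    ∀ i : ZMod l, e i ∈ E ∧ v i ∈ e i ∧ v (i + 1) ∈ e i

/-- The t-fold blow-up of a hypergraph. -/
def blowup [DecidableEq V] (E : Finset (Finset V)) (t : ℕ) :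
    Finset (Finset (V × Fin t)) :=
  E.biUnion fun h =>
    (Finset.univ : Finset ({x // x ∈ h} → Fin t)).image
      (fun σ => h.attach.image (fun u => (u.1, σ u)))

/-- function-form chain -/
def NChain (E' : Set (Finset V)) (a b : V) (w : ℕ → V) (e : ℕ → Finset V) (L : ℕ) : Prop :=
  w 0 = a ∧ w L = b ∧ ∀ i < L, e i ∈ E' ∧ w i ∈ e i ∧ w (i + 1) ∈ e i

lemma isWalk_mono {E₁ E₂ : Set (Finset V)} (hsub : E₁ ⊆ E₂) :
    ∀ (l : List (Finset V)) (a b : V), IsWalk E₁ a b l → IsWalk E₂ a b l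
  | [], _, _, h => h
  | e :: l, a, b, ⟨he, ha, x, hx, hw⟩ => ⟨hsub he, ha, x, hx, isWalk_mono hsub l x b hw⟩

lemma isWalk_toNChain {E' : Set (Finset V)} :
    ∀ (l : List (Finset V)) (a b : V), IsWalk E' a b l →
      ∃ w e, NChain E' a b w e l.length := by
  intro l
  induction l with
  | nil =>
    intro a b h
    exact ⟨fun _ => a, fun _ => ∅, rfl, (show a = b from h) ▸ rfl, by simp⟩
  | cons hd tl ih =>
    intro a b h
    obtain ⟨he, ha, x, hx, hw⟩ := h
    obtain ⟨w', e', h0', hL', hs'⟩ := ih x b hw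
    refine ⟨fun i => if i = 0 then a else w' (i - 1),
            fun i => if i = 0 then hd else e' (i - 1), by simp, by simp [hL'], ?_⟩
    intro i hi
    match i with
    | 0 =>
      simpa using ⟨he, ha, h0' ▸ hx⟩
    | (n + 1) =>
      have hn : n < tl.length := by simpa using hi
      simpa using hs' n hn

lemma nchain_shortcut {E' : Set (Finset V)} {a b : V} {w : ℕ → V} {e : ℕ → Finset V}
    {L i j : ℕ} (hc : NChain E' a b w e L) (hij : i < j) (hjL : j ≤ L)
    (hcase : w i = w j ∨ (j < L ∧ e i = e j)) :
    ∃ w' e', NChain E' a b w' e' (L - (j - i)) := by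
  obtain ⟨h0, hL, hstep⟩ := hc
  refine ⟨fun m => if m ≤ i then w m else w (m + (j - i)),
          fun m => if m < i then e m else e (m + (j - i)), by simpa, ?_, ?_⟩
  · by_cases hL' : L - (j - i) ≤ i
    · have hj : j = L := by omega
      have h1 : L - (j - i) = i := by omega
      rcases hcase with hvv | hedge
      · simp only [h1, if_pos le_rfl]
        rw [hvv, hj, hL]
      · omega
    · have h2 : L - (j - i) + (j - i) = L := by omega
      simp only [if_neg hL', h2, hL]
  · intro m hm
    rcases lt_trichotomy m i with h | h | h
    · have hm1 : m + 1 ≤ i := h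
      have hmL : m < L := by omega
      simp only [if_pos h.le, if_pos hm1, if_pos h]
      exact hstep m hmL
    · subst h
      have hjL' : j < L := by omega
      have hji : m + (j - m) = j := by omega
      simp only [if_pos le_rfl, if_neg (lt_irrefl m), if_neg (by omega : ¬ m + 1 ≤ m), hji]
      rw [show m + 1 + (j - m) = j + 1 from by omega]
      rcases hcase with hvv | hedge
      · exact ⟨(hstep j hjL').1, hvv ▸ (hstep j hjL').2.1, (hstep j hjL').2.2⟩
      · exact ⟨hedge.2 ▸ (hstep m (by omega)).1, hedge.2 ▸ (hstep m (by omega)).2.1,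
          (hstep j hjL').2.2⟩
    · have hmd : m + (j - i) < L := by omega
      simp only [if_neg (by omega : ¬ m ≤ i), if_neg (by omega : ¬ m + 1 ≤ i),
        if_neg (by omega : ¬ m < i)]
      have : m + 1 + (j - i) = m + (j - i) + 1 := by omega
      rw [this]
      exact hstep (m + (j - i)) hmd

lemma nchain_extract {E' : Set (Finset V)} {a b : V} :
    ∀ (L : ℕ) (w : ℕ → V) (e : ℕ → Finset V), NChain E' a b w e L →
    ∃ L' w' e', L' ≤ L ∧ NChain E' a b w' e' L' ∧
      (∀ i j, i ≤ L' → j ≤ L' → w' i = w' j → i = j) ∧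
      (∀ i j, i < L' → j < L' → e' i = e' j → i = j) := by
  intro L
  induction L using Nat.strong_induction_on with
  | _ L IH =>
    intro w e hc
    by_cases hv : ∃ i j, i < j ∧ j ≤ L ∧ (w i = w j ∨ (j < L ∧ e i = e j))
    · obtain ⟨i, j, hij, hjL, hcase⟩ := hv
      obtain ⟨w', e', hc'⟩ := nchain_shortcut hc hij hjL hcase
      obtain ⟨L', w'', e'', hle, hrest⟩ := IH (L - (j - i)) (by omega) w' e' hc'
      exact ⟨L', w'', e'', by omega, hrest⟩
    · push_neg at hv
      refine ⟨L, w, e, le_rfl, hc, ?_, ?_⟩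
      · intro i j hi hj hw
        by_contra hne
        rcases Nat.lt_or_ge i j with h | h
        · exact (hv i j h hj).1 hw
        · exact (hv j i (by omega) hi).1 hw.symm
      · intro i j hi hj he
        by_contra hne
        rcases Nat.lt_or_ge i j with h | h
        · exact (hv i j h hj.le).2 hj he
        · exact (hv j i (by omega) hi.le).2 hi he.symm
lemma walk_length_ge {E : Finset (Finset V)} {k : ℕ}
    (hgirth : ∀ l, l ≤ 2 * k + 1 → ¬HasBergeCycle (↑E : Set (Finset V)) l)
    {h0 : Finset V} (hh0 : h0 ∈ E) {a b : V} (ha : a ∈ h0) (hb : b ∈ h0) (hab : a ≠ b)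
    {l : List (Finset V)} (hw : IsWalk ((↑E : Set (Finset V)) \ {h0}) a b l) :
    2 * k + 1 ≤ l.length := by
  by_contra hlen
  push_neg at hlen
  obtain ⟨w, e, hc⟩ := isWalk_toNChain l a b hw
  obtain ⟨L', w', e', hle, ⟨hw0, hwL, hstep⟩, hvinj, heinj⟩ := nchain_extract _ _ _ hc
  have hL1 : 1 ≤ L' := by
    rcases Nat.eq_zero_or_pos L' with h | h
    · exfalso; apply hab; rw [← hw0, ← hwL, h]
    · exact h
  haveI : NeZero (L' + 1) := ⟨Nat.succ_ne_zero _⟩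
  haveI : Fact (1 < L' + 1) := ⟨by omega⟩
  apply hgirth (L' + 1) (by omega)
  refine ⟨by omega, fun i => w' (ZMod.val i),
    fun i => if ZMod.val i < L' then e' (ZMod.val i) else h0, ?_, ?_, ?_⟩
  · intro i j hij
    have hi := ZMod.val_lt i
    have hj := ZMod.val_lt j
    exact ZMod.val_injective _ (hvinj _ _ (by omega) (by omega) hij)
  · intro i j hij
    have hi := ZMod.val_lt i
    have hj := ZMod.val_lt j
    have hne : ∀ m, m < L' → e' m ≠ h0 := by
      intro m hm hcontra
      have := (hstep m hm).1
      rw [hcontra] at this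
      exact this.2 rfl
    apply ZMod.val_injective
    by_cases h1 : ZMod.val i < L' <;> by_cases h2 : ZMod.val j < L' <;>
      simp only [if_pos, if_neg, h1, h2, if_true, if_false] at hij
    · exact heinj _ _ h1 h2 hij
    · exact absurd hij (hne _ h1)
    · exact absurd hij.symm (hne _ h2)
    · omega
  · intro i
    dsimp only
    have hi := ZMod.val_lt i
    have hval : ZMod.val (i + 1) = (ZMod.val i + 1) % (L' + 1) := by
      rw [ZMod.val_add, ZMod.val_one]
    by_cases h1 : ZMod.val i < L'
    · have h2 : ZMod.val (i + 1) = ZMod.val i + 1 := by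
        rw [hval, Nat.mod_eq_of_lt (by omega)]
      rw [if_pos h1, h2]
      obtain ⟨he1, he2, he3⟩ := hstep _ h1
      exact ⟨he1.1, he2, he3⟩
    · have hiL : ZMod.val i = L' := by omega
      have h2 : ZMod.val (i + 1) = 0 := by rw [hval, hiL, Nat.mod_self]
      rw [if_neg h1, h2, hiL, hw0, hwL]
      exact ⟨hh0, hb, ha⟩
lemma mem_blowup_iff [DecidableEq V] {E : Finset (Finset V)} {t : ℕ}
    {e : Finset (V × Fin t)} :
    e ∈ blowup E t ↔ ∃ h0 ∈ E, ∃ σ : {x // x ∈ h0} → Fin t,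
      e = h0.attach.image (fun u => (u.1, σ u)) := by
  simp only [blowup, Finset.mem_biUnion, Finset.mem_image, Finset.mem_univ, true_and]
  constructor
  · rintro ⟨h0, hh0, σ, rfl⟩; exact ⟨h0, hh0, σ, rfl⟩
  · rintro ⟨h0, hh0, σ, rfl⟩; exact ⟨h0, hh0, σ, rfl⟩

lemma blowup_proj [DecidableEq V] {h0 : Finset V} {t : ℕ} (σ : {x // x ∈ h0} → Fin t) :
    (h0.attach.image (fun u => (u.1, σ u))).image Prod.fst = h0 := by
  rw [Finset.image_image]
  have : (Prod.fst ∘ fun u : {x // x ∈ h0} => (u.1, σ u)) = Subtype.val := rfl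
  rw [this, Finset.attach_image_val]

lemma blowup_card [DecidableEq V] {h0 : Finset V} {t : ℕ} (σ : {x // x ∈ h0} → Fin t) :
    (h0.attach.image (fun u => (u.1, σ u))).card = h0.card := by
  rw [Finset.card_image_of_injective _ (fun u v huv => Subtype.ext (congrArg Prod.fst huv)),
    Finset.card_attach]

lemma blowup_fst_inj [DecidableEq V] {h0 : Finset V} {t : ℕ} {σ : {x // x ∈ h0} → Fin t}
    {x y : V × Fin t} (hx : x ∈ h0.attach.image (fun u => (u.1, σ u)))
    (hy : y ∈ h0.attach.image (fun u => (u.1, σ u))) (hxy : x.1 = y.1) : x = y := by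
  simp only [Finset.mem_image] at hx hy
  obtain ⟨u, _, rfl⟩ := hx
  obtain ⟨v, _, rfl⟩ := hy
  have : u = v := Subtype.ext hxy
  rw [this]

lemma isWalk_proj {t : ℕ} {W : Set (Finset (V × Fin t))} {E' : Set (Finset V)}
    [DecidableEq V] (hW : ∀ e ∈ W, e.image Prod.fst ∈ E') :
    ∀ (l : List (Finset (V × Fin t))) (x y : V × Fin t), IsWalk W x y l →
      IsWalk E' x.1 y.1 (l.map (Finset.image Prod.fst)) := by
  intro l
  induction l with
  | nil => intro x y h; exact congrArg Prod.fst (h : x = y)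
  | cons hd tl ih =>
    rintro x y ⟨he, hx, z, hz, hw⟩
    exact ⟨hW hd he, Finset.mem_image_of_mem _ hx, z.1, Finset.mem_image_of_mem _ hz,
      ih z y hw⟩

lemma map_one_sum {α : Type*} (l : List α) :
    (l.map fun _ => (1 : ℝ≥0∞)).sum = l.length := by
  induction l with
  | nil => simp
  | cons hd tl ih => simp [ih, add_comm]
lemma part1_walk [DecidableEq V] {E : Finset (Finset V)} {k t : ℕ}
    (hgirth : ∀ l, l ≤ 2 * k + 1 → ¬HasBergeCycle (↑E : Set (Finset V)) l)
    {h : Finset (V × Fin t)} (hh : h ∈ blowup E t)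
    {x y : V × Fin t} (hx : x ∈ h) (hy : y ∈ h) (hxy : x ≠ y)
    {l : List (Finset (V × Fin t))}
    (hw : IsWalk (((↑(blowup E t) : Set (Finset (V × Fin t))) \ {h}) \
        (setOf (fun e : Finset (V × Fin t) =>
          e ∈ blowup E t ∧ e ≠ h ∧ e.image Prod.fst = h.image Prod.fst))) x y l) :
    2 * k + 1 ≤ l.length := by
  obtain ⟨h0, hh0, σ, rfl⟩ := mem_blowup_iff.mp hh
  have hW : ∀ e ∈ (((↑(blowup E t) : Set (Finset (V × Fin t))) \
        {h0.attach.image (fun u => (u.1, σ u))}) \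
        (setOf (fun e : Finset (V × Fin t) =>
          e ∈ blowup E t ∧ e ≠ h0.attach.image (fun u => (u.1, σ u)) ∧
            e.image Prod.fst = (h0.attach.image (fun u => (u.1, σ u))).image Prod.fst))),
      e.image Prod.fst ∈ (↑E : Set (Finset V)) \ {h0} := by
    rintro e ⟨⟨heB, heh⟩, heF⟩
    obtain ⟨h1, hh1, σ1, rfl⟩ := mem_blowup_iff.mp heB
    rw [blowup_proj]
    refine ⟨hh1, ?_⟩
    intro hcont
    rw [Set.mem_singleton_iff] at hcont
    exact heF ⟨heB, by simpa using heh, by rw [blowup_proj, blowup_proj, hcont]⟩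
  have hproj := isWalk_proj hW l x y hw
  have hxh0 : x.1 ∈ h0 := by
    have := Finset.mem_image_of_mem Prod.fst hx
    rwa [blowup_proj] at this
  have hyh0 : y.1 ∈ h0 := by
    have := Finset.mem_image_of_mem Prod.fst hy
    rwa [blowup_proj] at this
  have hab : x.1 ≠ y.1 := fun hc => hxy (blowup_fst_inj hx hy hc)
  have := walk_length_ge hgirth hh0 hxh0 hyh0 hab hproj
  simpa using this

lemma part1_dist [DecidableEq V] {E : Finset (Finset V)} {t : ℕ}
    {h : Finset (V × Fin t)} (hh : h ∈ blowup E t)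
    {x y : V × Fin t} (hx : x ∈ h) (hy : y ∈ h) (hxy : x ≠ y) :
    hDist
      ((↑(blowup E t) : Set (Finset (V × Fin t))) \
        (setOf (fun e : Finset (V × Fin t) =>
          e ∈ blowup E t ∧ e ≠ h ∧ e.image Prod.fst = h.image Prod.fst)))
      (fun _ => 1) x y = 1 := by
  apply le_antisymm
  · apply sInf_le
    refine ⟨[h], ⟨⟨hh, ?_⟩, hx, y, hy, rfl⟩, by simp⟩
    rintro ⟨-, hne, -⟩
    exact hne rfl
  · apply le_sInf
    rintro d ⟨l, hw, rfl⟩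
    match l with
    | [] => exact absurd (hw : x = y) hxy
    | e :: l' =>
      simp only [List.map_cons, List.sum_cons]
      exact le_self_add

/-- in the blow-up H' of an r-uniform hypergraph of girth ≥ 2k+2, for any
hyperedge h, letting F consist of all other copies of the same base hyperedge, every walk
between two vertices of h in (H'∖{h})∖F has length ≥ 2k+1 (all weights 1), while the
distance in H'∖F is 1.  Consequently, the only f-EFT (2k−1)-hyperspanner of H' for
f ≥ t^r − 1 is H' itself. -/
theorem blowup_lower_bound [DecidableEq V]
    (E : Finset (Finset V)) (r k t : ℕ) (hr : 2 ≤ r) (hk : 1 ≤ k) (ht : 1 ≤ t)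
    (huni : ∀ h ∈ E, h.card = r)
    (hgirth : ∀ l, l ≤ 2 * k + 1 → ¬HasBergeCycle (↑E : Set (Finset V)) l) :
    (∀ h ∈ blowup E t, ∀ x ∈ h, ∀ y ∈ h, x ≠ y →
      (∀ l, IsWalk
          (((↑(blowup E t) : Set (Finset (V × Fin t))) \ {h}) \
            (setOf (fun e : Finset (V × Fin t) =>
              e ∈ blowup E t ∧ e ≠ h ∧ e.image Prod.fst = h.image Prod.fst))) x y l →
        2 * k + 1 ≤ l.length) ∧
      hDist
        ((↑(blowup E t) : Set (Finset (V × Fin t))) \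
          (setOf (fun e : Finset (V × Fin t) => e ∈ blowup E t ∧ e ≠ h ∧ e.image Prod.fst = h.image Prod.fst)))
        (fun _ => 1) x y = 1) ∧
    (∀ f : ℕ, t ^ r - 1 ≤ f →
      ∀ S : Finset (Finset (V × Fin t)), S ⊆ blowup E t →
        (∀ F : Set (Finset (V × Fin t)), F ⊆ ↑(blowup E t) → F.Finite → F.ncard ≤ f →
          ∀ u v : V × Fin t,
            hDist ((↑S : Set (Finset (V × Fin t))) \ F) (fun _ => 1) u v
              ≤ (2 * k - 1 : ℕ) *
                hDist ((↑(blowup E t) : Set (Finset (V × Fin t))) \ F) (fun _ => 1) u v) →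
        S = blowup E t) := by
  constructor
  · intro h hh x hx y hy hxy
    exact ⟨fun l hw => part1_walk hgirth hh hx hy hxy hw, part1_dist hh hx hy hxy⟩
  · intro f hf S hS hSpanner
    by_contra hne
    obtain ⟨h, hh, hhS⟩ := Finset.not_subset.mp
      (fun hsub => hne (Finset.Subset.antisymm hS hsub))
    set F : Set (Finset (V × Fin t)) :=
      setOf (fun e : Finset (V × Fin t) =>
        e ∈ blowup E t ∧ e ≠ h ∧ e.image Prod.fst = h.image Prod.fst) with hFdef
    obtain ⟨h0, hh0, σ, hhform⟩ := mem_blowup_iff.mp hh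
    -- cardinality of F
    set copies : Finset (Finset (V × Fin t)) :=
      (Finset.univ : Finset ({x // x ∈ h0} → Fin t)).image
        (fun σ' => h0.attach.image (fun u => (u.1, σ' u))) with hcopies
    have hhcopies : h ∈ copies := by
      rw [hhform]
      exact Finset.mem_image_of_mem _ (Finset.mem_univ σ)
    have hFsub' : F ⊆ ↑(copies.erase h) := by
      rintro e ⟨heB, hne', hproj⟩
      obtain ⟨h1, hh1, σ1, rfl⟩ := mem_blowup_iff.mp heB
      have h10 : h1 = h0 := by
        rw [blowup_proj, hhform, blowup_proj] at hproj
        exact hproj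
      subst h10
      rw [Finset.coe_erase]
      exact ⟨Finset.mem_image_of_mem _ (Finset.mem_univ σ1), hne'⟩
    have hFcard : F.ncard ≤ f := by
      have h1 : F.ncard ≤ (copies.erase h).card := by
        have := Set.ncard_le_ncard hFsub' (Finset.finite_toSet _)
        rwa [Set.ncard_coe_finset] at this
      have h2 : (copies.erase h).card = copies.card - 1 :=
        Finset.card_erase_of_mem hhcopies
      have h3 : copies.card ≤ t ^ r := by
        calc copies.card ≤ (Finset.univ : Finset ({x // x ∈ h0} → Fin t)).card :=
              Finset.card_image_le
          _ = t ^ r := by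
              rw [Finset.card_univ, Fintype.card_fun, Fintype.card_fin, Fintype.card_coe,
                huni h0 hh0]
      omega
    have hFsub : F ⊆ ↑(blowup E t) := fun e he => he.1
    have hFfin : F.Finite := Set.Finite.subset (Finset.finite_toSet _) hFsub
    -- pick two distinct vertices of h
    have hcard : 1 < h.card := by
      rw [hhform, blowup_card, huni h0 hh0]; omega
    obtain ⟨x, hx, y, hy, hxy⟩ := Finset.one_lt_card.mp hcard
    have key := hSpanner F hFsub hFfin hFcard x y
    rw [part1_dist hh hx hy hxy, mul_one] at key
    have hsub : (↑S : Set (Finset (V × Fin t))) \ F ⊆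
        ((↑(blowup E t) : Set (Finset (V × Fin t))) \ {h}) \ F := by
      rintro e ⟨heS, heF⟩
      exact ⟨⟨hS heS, fun hc => hhS (Set.mem_singleton_iff.mp hc ▸ heS)⟩, heF⟩
    have hlow : ((2 * k + 1 : ℕ) : ℝ≥0∞) ≤
        hDist ((↑S : Set (Finset (V × Fin t))) \ F) (fun _ => 1) x y := by
      apply le_sInf
      rintro d ⟨l, hw, rfl⟩
      rw [map_one_sum]
      exact_mod_cast part1_walk hgirth hh hx hy hxy (isWalk_mono hsub l x y hw)
    have hfinal : ((2 * k + 1 : ℕ) : ℝ≥0∞) ≤ ((2 * k - 1 : ℕ) : ℝ≥0∞) := hlow.trans key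
    rw [Nat.cast_le] at hfinal
    omega
end
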